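/- arXiv:2602.08069 — 4 statements merged into one kernel-verified Lean document; each statement's English description precedes it below -/
import Mathlib

section
/- Let f: H → ℝ be Fréchet differentiable with (L/2)-Lipschitz derivative, A: H → H* a bounded linear self-adjoint operator with ‖A‖_op ≤ L/2, x ∈ H and λ ≥ L. If x₊ ∈ H satisfies the optimality condition of the regularized quadratic model, i.e., F'(x₊) := f'(x₊) − f'(x) − A(x₊ − x) − λ R(x₊ − x), where R is the Riesz map, then ⟨F'(x₊), x − x₊⟩ ≥ (1/(2λ))‖F'(x₊)‖_*^2. -/
/-!
With `d = x₊ - x` and `G = f'(x₊) - f'(x) - A d`, the two `L/2`-bounds give `‖G‖ ≤ L‖d‖ ≤ λ‖d‖`,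
and `F'(x₊) = G - λ R d`. Writing `G = R g`, the claim reads `‖g - λd‖² ≤ 2λ ⟪λd - g, d⟫`, and
`2λ ⟪λd - g, d⟫ - ‖g - λd‖² = λ²‖d‖² - ‖g‖² ≥ 0`.
-/

open InnerProductSpace

theorem one_div_two_mul_norm_sub_smul_sq_le_inner {E : Type*} [NormedAddCommGroup E]
    [InnerProductSpace ℝ E] {g d : E} {c : ℝ} (h : ‖g‖ ≤ c * ‖d‖) :
    1 / (2 * c) * ‖g - c • d‖ ^ 2 ≤ ⟪c • d - g, d⟫_ℝ := by
  rcases le_or_gt c 0 with hc | hc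
  · have hcd : c * ‖d‖ = 0 :=
      le_antisymm (mul_nonpos_of_nonpos_of_nonneg hc (norm_nonneg d)) ((norm_nonneg g).trans h)
    have hg : g = 0 := norm_le_zero_iff.mp (hcd ▸ h)
    simp only [hg, zero_sub, sub_zero, norm_neg, norm_smul, real_inner_smul_left,
      real_inner_self_eq_norm_sq, Real.norm_eq_abs, abs_of_nonpos hc]
    rw [neg_mul, hcd, sq, sq, ← mul_assoc c, hcd]
    simp
  · have hsq : ‖g‖ ^ 2 ≤ (c * ‖d‖) ^ 2 := pow_le_pow_left₀ (norm_nonneg g) h 2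
    rw [div_mul_eq_mul_div, one_mul, div_le_iff₀ (by positivity), norm_sub_sq_real,
      inner_sub_left, real_inner_smul_left, real_inner_smul_right, norm_smul,
      Real.norm_eq_abs, abs_of_pos hc, real_inner_self_eq_norm_sq]
    nlinarith

theorem norm_sub_smul_toDual_sq_le_apply_neg {H : Type*} [NormedAddCommGroup H]
    [InnerProductSpace ℝ H] [CompleteSpace H] {G : StrongDual ℝ H} {d : H} {c : ℝ}
    (h : ‖G‖ ≤ c * ‖d‖) :
    1 / (2 * c) * ‖G - c • toDual ℝ H d‖ ^ 2 ≤ (G - c • toDual ℝ H d) (-d) := by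
  obtain ⟨g, rfl⟩ := (toDual ℝ H).surjective G
  rw [← map_smul, ← map_sub, LinearIsometryEquiv.norm_map, toDual_apply_apply, inner_neg_right,
    ← inner_neg_left, neg_sub]
  exact one_div_two_mul_norm_sub_smul_sq_le_inner (by rwa [LinearIsometryEquiv.norm_map] at h)

theorem first_acceptance_condition_general
    {H : Type*} [NormedAddCommGroup H] [InnerProductSpace ℝ H]
    [CompleteSpace H]
    (L lam : ℝ) (hlam : L ≤ lam)
    (f' : H → (H →L[ℝ] ℝ))
    (hlip : ∀ u v : H, ‖f' u - f' v‖ ≤ L / 2 * ‖u - v‖)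
    (A : H →L[ℝ] (H →L[ℝ] ℝ)) (hA : ‖A‖ ≤ L / 2)
    (x xplus : H) (Fp : H →L[ℝ] ℝ)
    (hFp : Fp = f' xplus - f' x - A (xplus - x)
      - lam • (InnerProductSpace.toDual ℝ H (xplus - x) : H →L[ℝ] ℝ)) :
    Fp (x - xplus) ≥ 1 / (2 * lam) * ‖Fp‖ ^ 2 := by
  have hG : ‖f' xplus - f' x - A (xplus - x)‖ ≤ lam * ‖xplus - x‖ :=
    calc ‖f' xplus - f' x - A (xplus - x)‖
        ≤ ‖f' xplus - f' x‖ + ‖A (xplus - x)‖ := norm_sub_le _ _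
      _ ≤ L / 2 * ‖xplus - x‖ + L / 2 * ‖xplus - x‖ :=
        add_le_add (hlip xplus x) (A.le_of_opNorm_le hA _)
      _ ≤ lam * ‖xplus - x‖ := by nlinarith [norm_nonneg (xplus - x)]
  rw [hFp, ← neg_sub xplus x]
  exact norm_sub_smul_toDual_sq_le_apply_neg hG

theorem first_acceptance_condition
    {H : Type*} [NormedAddCommGroup H] [InnerProductSpace ℝ H]
    [CompleteSpace H]
    (L lam : ℝ) (hL : 0 < L) (hlam : L ≤ lam)
    (f : H → ℝ) (f' : H → (H →L[ℝ] ℝ))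
    (hdiff : ∀ u : H, HasFDerivAt f (f' u) u)
    (hlip : ∀ u v : H, ‖f' u - f' v‖ ≤ L / 2 * ‖u - v‖)
    (A : H →L[ℝ] (H →L[ℝ] ℝ)) (hA : ‖A‖ ≤ L / 2)
    (hAsym : ∀ u v : H, A u v = A v u)
    (x xplus : H) (Fp : H →L[ℝ] ℝ)
    (hFp : Fp = f' xplus - f' x - A (xplus - x)
      - lam • (InnerProductSpace.toDual ℝ H (xplus - x) : H →L[ℝ] ℝ)) :
    Fp (x - xplus) ≥ 1 / (2 * lam) * ‖Fp‖ ^ 2 :=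
  first_acceptance_condition_general L lam hlam f' hlip A hA x xplus Fp hFp
end

section
/- Let f: H → ℝ have (L/2)-Lipschitz Fréchet derivative, ψ: H → ℝ ∪ {+∞} be proper convex lower semicontinuous, A self-adjoint with ‖A‖_op ≤ L/2, λ ≥ L, and let x₊ be a minimizer over H of y ↦ ⟨f'(x), y−x⟩ + (1/2)⟨A(y−x), y−x⟩ + (λ/2)‖y−x‖² + ψ(y). Then F(x) − F(x₊) ≥ (λ/4)‖x₊ − x‖², where F = f + ψ. -/
/-!
Comparing the model value at `x₊` with its value at the points `x + t (x₊ - x)`, `t < 1`, of the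
segment, using convexity of `ψ`, and letting `t → 1` gives the three-point inequality
`⟨f'(x), x₊ - x⟩ + ⟨A(x₊ - x), x₊ - x⟩ + λ‖x₊ - x‖² + ψ(x₊) ≤ ψ(x)`. The descent lemma
`f(x₊) ≤ f(x) + ⟨f'(x), x₊ - x⟩ + (L/4)‖x₊ - x‖²` and `⟨A s, s⟩ ≥ -(L/2)‖s‖²` then leave
`(λ - 3L/4)‖x₊ - x‖² ≥ (λ/4)‖x₊ - x‖²` of decrease.
-/

open Set Filter Topology

theorem le_add_fderiv_add_of_lipschitz_fderiv {E : Type*} [NormedAddCommGroup E] [NormedSpace ℝ E]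
    {f : E → ℝ} {f' : E → E →L[ℝ] ℝ} {K : ℝ} (hf : ∀ u, HasFDerivAt f (f' u) u)
    (hf' : ∀ u v, ‖f' u - f' v‖ ≤ K * ‖u - v‖) (x y : E) :
    f y ≤ f x + f' x (y - x) + K / 2 * ‖y - x‖ ^ 2 := by
  set s := y - x
  -- `φ' ≤ 0` on `t ≥ 0` is exactly the Lipschitz bound along the segment.
  let φ : ℝ → ℝ := fun t ↦ f (x + t • s) - t * f' x s - K / 2 * t ^ 2 * ‖s‖ ^ 2
  let φ' : ℝ → ℝ := fun t ↦ f' (x + t • s) s - f' x s - K * t * ‖s‖ ^ 2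
  have hφ : ∀ t, HasDerivAt φ (φ' t) t := by
    intro t
    have hline : HasDerivAt (fun t : ℝ ↦ x + t • s) s t :=
      ((hasDerivAt_id t).smul_const s).const_add x |>.congr_deriv (one_smul ℝ s)
    have := (((hf _).comp_hasDerivAt t hline).sub ((hasDerivAt_id t).mul_const (f' x s))).sub
      (((hasDerivAt_pow 2 t).const_mul (K / 2)).mul_const (‖s‖ ^ 2))
    exact this.congr_deriv (by simp only [φ']; ring)
  have hφ'_nonpos : ∀ t ∈ interior (Ici (0 : ℝ)), φ' t ≤ 0 := by
    rw [interior_Ici]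
    intro t (ht : 0 < t)
    have : f' (x + t • s) s - f' x s ≤ K * t * ‖s‖ ^ 2 :=
      calc f' (x + t • s) s - f' x s = (f' (x + t • s) - f' x) s := rfl
        _ ≤ ‖f' (x + t • s) - f' x‖ * ‖s‖ :=
          (le_abs_self _).trans ((f' (x + t • s) - f' x).le_opNorm s)
        _ ≤ K * ‖t • s‖ * ‖s‖ := by
          gcongr
          simpa using hf' (x + t • s) x
        _ = K * t * ‖s‖ ^ 2 := by rw [norm_smul, Real.norm_of_nonneg ht.le]; ring
    simp only [φ']
    linarith
  have hanti : AntitoneOn φ (Ici 0) :=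
    antitoneOn_of_hasDerivWithinAt_nonpos (convex_Ici 0)
      (fun t _ ↦ (hφ t).continuousAt.continuousWithinAt)
      (fun t _ ↦ (hφ t).hasDerivWithinAt) hφ'_nonpos
  have := hanti self_mem_Ici (show (0:ℝ) ≤ 1 by norm_num) zero_le_one
  simp only [φ, s, zero_smul, add_zero, one_smul, add_sub_cancel] at this
  linarith

theorem add_two_mul_add_le_of_forall_lt_one {a b p q : ℝ}
    (h : ∀ t ∈ Ico (0 : ℝ) 1, a + b + p ≤ t * a + t ^ 2 * b + (t * p + (1 - t) * q)) :
    a + 2 * b + p ≤ q := by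
  have hlt : ∀ t ∈ Ico (0 : ℝ) 1, a + (1 + t) * b + p ≤ q := by
    intro t ht
    have h1t : 0 < 1 - t := sub_pos.mpr ht.2
    have : (1 - t) * (a + (1 + t) * b + p) ≤ (1 - t) * q := by linarith [h t ht]
    exact le_of_mul_le_mul_left this h1t
  have hlim : Tendsto (fun t : ℝ ↦ a + (1 + t) * b + p) (𝓝[<] 1) (𝓝 (a + (1 + 1) * b + p)) :=
    (Continuous.tendsto (by fun_prop) 1).mono_left nhdsWithin_le_nhds
  have := le_of_tendsto hlim <| eventually_of_mem
    (Ico_mem_nhdsLT_of_mem (by norm_num : (1 : ℝ) ∈ Ioc 0 1)) hlt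
  linarith

theorem le_of_minimizes_linear_add_quadratic_add_convex
    {E : Type*} [AddCommGroup E] [Module ℝ E]
    (g : E →ₗ[ℝ] ℝ) (Q : E → ℝ) (hQ : ∀ (t : ℝ) s, Q (t • s) = t ^ 2 * Q s)
    (ψ : E → EReal) (hψbot : ∀ y, ψ y ≠ ⊥)
    (hψconv : ∀ u v : E, ∀ t : ℝ, 0 ≤ t → t ≤ 1 →
      ψ (t • u + (1 - t) • v) ≤ (t : EReal) * ψ u + ((1 - t : ℝ) : EReal) * ψ v)
    {x xplus : E} (hx : ψ x ≠ ⊤)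
    (hmin : ∀ y, ((g (xplus - x) + Q (xplus - x) : ℝ) : EReal) + ψ xplus ≤
      ((g (y - x) + Q (y - x) : ℝ) : EReal) + ψ y) :
    ((g (xplus - x) + 2 * Q (xplus - x) : ℝ) : EReal) + ψ xplus ≤ ψ x := by
  set s := xplus - x
  lift ψ x to ℝ using ⟨hx, hψbot x⟩ with q hq
  have hplus : ψ xplus ≠ ⊤ := by
    intro htop
    have := hmin x
    rw [htop, EReal.coe_add_top, top_le_iff, ← hq] at this
    exact EReal.coe_ne_top _ this
  lift ψ xplus to ℝ using ⟨hplus, hψbot xplus⟩ with p hp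
  rw [← EReal.coe_add, EReal.coe_le_coe_iff]
  refine add_two_mul_add_le_of_forall_lt_one fun t ht ↦ ?_
  have hseg : t • xplus + (1 - t) • x - x = t • s := by simp only [s]; module
  have hconv := hψconv xplus x t ht.1 ht.2.le
  rw [← hp, ← hq, ← EReal.coe_mul, ← EReal.coe_mul, ← EReal.coe_add] at hconv
  have := (hmin (t • xplus + (1 - t) • x)).trans (add_le_add_right hconv _)
  rw [hseg, map_smul, hQ, smul_eq_mul, ← EReal.coe_add, ← EReal.coe_add,
    EReal.coe_le_coe_iff] at this
  linarith

open InnerProductSpace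

theorem sufficient_decrease_of_model_minimizer_general
    {H : Type*} [NormedAddCommGroup H] [InnerProductSpace ℝ H]
    (L lam : ℝ) (hlam : L ≤ lam)
    (f : H → ℝ) (f' : H → (H →L[ℝ] ℝ))
    (hdiff : ∀ u : H, HasFDerivAt f (f' u) u)
    (hlip : ∀ u v : H, ‖f' u - f' v‖ ≤ L / 2 * ‖u - v‖)
    (ψ : H → EReal)
    (hψbot : ∀ y, ψ y ≠ ⊥)
    (hψconv : ∀ u v : H, ∀ t : ℝ, 0 ≤ t → t ≤ 1 →
      ψ (t • u + (1 - t) • v) ≤ (t : EReal) * ψ u + ((1 - t : ℝ) : EReal) * ψ v)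
    (A : H →L[ℝ] (H →L[ℝ] ℝ)) (hA : ‖A‖ ≤ L / 2)
    (x : H) (hxdom : ψ x ≠ ⊤)
    (xplus : H)
    (hmin : ∀ y : H,
      ((f' x (xplus - x) + 1 / 2 * A (xplus - x) (xplus - x)
          + lam / 2 * ‖xplus - x‖ ^ 2 : ℝ) : EReal) + ψ xplus ≤
      ((f' x (y - x) + 1 / 2 * A (y - x) (y - x)
          + lam / 2 * ‖y - x‖ ^ 2 : ℝ) : EReal) + ψ y) :
    ((f xplus : EReal) + ψ xplus) + ((lam / 4 * ‖xplus - x‖ ^ 2 : ℝ) : EReal) ≤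
      (f x : EReal) + ψ x := by
  set s := xplus - x
  let Q : H → ℝ := fun s ↦ 1 / 2 * A s s + lam / 2 * ‖s‖ ^ 2
  have hQ : ∀ (t : ℝ) s, Q (t • s) = t ^ 2 * Q s := fun t s ↦ by
    simp only [Q, map_smul, smul_apply, smul_eq_mul, norm_smul,
      Real.norm_eq_abs, mul_pow, sq_abs]
    ring
  have hstep : ((f' x s + 2 * Q s : ℝ) : EReal) + ψ xplus ≤ ψ x :=
    le_of_minimizes_linear_add_quadratic_add_convex (f' x : H →ₗ[ℝ] ℝ) Q hQ ψ hψbot hψconv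
      hxdom fun y ↦ by simpa only [Q, add_assoc, ContinuousLinearMap.coe_coe] using hmin y
  have hdescent := le_add_fderiv_add_of_lipschitz_fderiv hdiff hlip x xplus
  have hAss : |A s s| ≤ L / 2 * ‖s‖ ^ 2 :=
    calc |A s s| ≤ ‖A‖ * ‖s‖ * ‖s‖ := A.le_opNorm₂ s s
      _ ≤ L / 2 * ‖s‖ ^ 2 := by rw [mul_assoc, ← sq]; gcongr
  have hreal : f xplus + lam / 4 * ‖s‖ ^ 2 ≤ f x + (f' x s + 2 * Q s) := by
    simp only [Q]
    linarith [abs_le.mp hAss, mul_nonneg (sub_nonneg.2 hlam) (sq_nonneg ‖s‖)]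
  calc ((f xplus : EReal) + ψ xplus) + ((lam / 4 * ‖s‖ ^ 2 : ℝ) : EReal)
      = ((f xplus + lam / 4 * ‖s‖ ^ 2 : ℝ) : EReal) + ψ xplus := by
        rw [EReal.coe_add, add_right_comm]
    _ ≤ ((f x + (f' x s + 2 * Q s) : ℝ) : EReal) + ψ xplus := by gcongr
    _ = (f x : EReal) + (((f' x s + 2 * Q s : ℝ) : EReal) + ψ xplus) := by
        rw [EReal.coe_add, add_assoc]
    _ ≤ (f x : EReal) + ψ x := by gcongr

theorem sufficient_decrease_of_model_minimizer
    {H : Type*} [NormedAddCommGroup H] [InnerProductSpace ℝ H]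
    (L lam : ℝ) (hL : 0 < L) (hlam : L ≤ lam)
    (f : H → ℝ) (f' : H → (H →L[ℝ] ℝ))
    (hdiff : ∀ u : H, HasFDerivAt f (f' u) u)
    (hlip : ∀ u v : H, ‖f' u - f' v‖ ≤ L / 2 * ‖u - v‖)
    (ψ : H → EReal)
    (hψbot : ∀ y, ψ y ≠ ⊥) (hψproper : ∃ y, ψ y ≠ ⊤)
    (hψconv : ∀ u v : H, ∀ t : ℝ, 0 ≤ t → t ≤ 1 →
      ψ (t • u + (1 - t) • v) ≤ (t : EReal) * ψ u + ((1 - t : ℝ) : EReal) * ψ v)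
    (hψlsc : LowerSemicontinuous ψ)
    (A : H →L[ℝ] (H →L[ℝ] ℝ)) (hA : ‖A‖ ≤ L / 2)
    (hAsym : ∀ u v : H, A u v = A v u)
    (x : H) (hxdom : ψ x ≠ ⊤)
    (xplus : H)
    (hmin : ∀ y : H,
      ((f' x (xplus - x) + 1 / 2 * A (xplus - x) (xplus - x)
          + lam / 2 * ‖xplus - x‖ ^ 2 : ℝ) : EReal) + ψ xplus ≤
      ((f' x (y - x) + 1 / 2 * A (y - x) (y - x)
          + lam / 2 * ‖y - x‖ ^ 2 : ℝ) : EReal) + ψ y) :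
    ((f xplus : EReal) + ψ xplus) + ((lam / 4 * ‖xplus - x‖ ^ 2 : ℝ) : EReal) ≤
      (f x : EReal) + ψ x :=
  sufficient_decrease_of_model_minimizer_general L lam hlam f f' hdiff hlip ψ hψbot hψconv A hA x
    hxdom xplus hmin
end

section
/- Fix x ∈ H, a positive semidefinite bounded self-adjoint operator A on a Hilbert space H, a vector g ∈ H*, and a proper convex lower semicontinuous ψ. For λ > 0 let x₊(λ) be the unique minimizer of y ↦ ⟨g, y−x⟩ + (1/2)⟨A(y−x), y−x⟩ + (λ/2)‖y−x‖² + ψ(y). Then for all 0 < λ ≤ λ', ‖x₊(λ) − x₊(λ')‖ ≤ ((λ'−λ)/λ')·‖x − x₊(λ)‖. -/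
/-!
The objective `F_λ y = ⟨g, y - x⟩ + ½⟨A(y - x), y - x⟩ + (λ/2)‖y - x‖² + ψ y` is `λ`-strongly convex
on the domain of `ψ`, so its minimizer `u = x₊(λ)` satisfies the quadratic growth bound
`F_λ u + (λ/2)‖w - u‖² ≤ F_λ w`. Applying this to `F_λ` at `v = x₊(λ')` and to `F_λ'` at `u`, and
adding, everything cancels except `F_λ' - F_λ = ((λ' - λ)/2)‖· - x‖²`, which gives
`λ'‖u - v‖² ≤ (λ' - λ)⟨u - x, u - v⟩`; Cauchy–Schwarz finishes.
-/

open Filter Topology Set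

theorem le_of_forall_one_sub_mul_le {c d : ℝ} (h : ∀ t ∈ Ioo (0 : ℝ) 1, (1 - t) * c ≤ d) :
    c ≤ d := by
  have hcont : Continuous fun t : ℝ ↦ (1 - t) * c := by fun_prop
  exact le_of_tendsto ((hcont.tendsto' 0 c (by simp)).mono_left nhdsWithin_le_nhds)
    (eventually_of_mem (Ioo_mem_nhdsGT one_pos) h)

theorem StrongConvexOn.add_le_of_isMinOn {E : Type*} [NormedAddCommGroup E] [NormedSpace ℝ E]
    {s : Set E} {m : ℝ} {f : E → ℝ} {u w : E} (hf : StrongConvexOn s m f) (hmin : IsMinOn f s u)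
    (hu : u ∈ s) (hw : w ∈ s) : f u + m / 2 * ‖w - u‖ ^ 2 ≤ f w := by
  suffices m / 2 * ‖w - u‖ ^ 2 ≤ f w - f u by linarith
  refine le_of_forall_one_sub_mul_le fun t ⟨ht₀, ht₁⟩ ↦ ?_
  have hseg := hf.1 hw hu ht₀.le (sub_nonneg.2 ht₁.le) (add_sub_cancel t 1)
  have hconv := hf.2 hw hu ht₀.le (sub_nonneg.2 ht₁.le) (add_sub_cancel t 1)
  have hle := isMinOn_iff.1 hmin _ hseg
  simp only [smul_eq_mul] at hconv
  have : t * ((1 - t) * (m / 2 * ‖w - u‖ ^ 2)) ≤ t * (f w - f u) := by nlinarith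
  exact le_of_mul_le_mul_left this ht₀

theorem LinearMap.apply_smul_add_smul_self {R M : Type*} [CommRing R] [AddCommGroup M]
    [Module R M] (B : M →ₗ[R] M →ₗ[R] R) (p q : M) {a b : R} (hab : a + b = 1) :
    B (a • p + b • q) (a • p + b • q) = a * B p p + b * B q q - a * b * B (p - q) (p - q) := by
  obtain rfl := eq_sub_of_add_eq' hab
  simp only [map_add, map_smul, map_sub, LinearMap.add_apply, LinearMap.smul_apply,
    LinearMap.sub_apply, smul_eq_mul]
  ring

theorem strongConvexOn_quadratic {E : Type*} [NormedAddCommGroup E] [InnerProductSpace ℝ E]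
    {s : Set E} (hs : Convex ℝ s) (A : E →L[ℝ] E →L[ℝ] ℝ) (hA : ∀ h, 0 ≤ A h h) (g : E →L[ℝ] ℝ)
    (x : E) (m : ℝ) :
    StrongConvexOn s m fun y ↦ g (y - x) + 1 / 2 * A (y - x) (y - x) + m / 2 * ‖y - x‖ ^ 2 := by
  refine ⟨hs, fun p _ q _ a b ha hb hab ↦ ?_⟩
  have hsub : a • p + b • q - x = a • (p - x) + b • (q - x) := by
    obtain rfl := eq_sub_of_add_eq' hab
    module
  have hpq : p - x - (q - x) = p - q := sub_sub_sub_cancel_right p q x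
  have hA' := A.toLinearMap₁₂.apply_smul_add_smul_self (p - x) (q - x) hab
  have hN := (innerₗ E).apply_smul_add_smul_self (p - x) (q - x) hab
  simp only [ContinuousLinearMap.toLinearMap₁₂_apply_apply_apply, hpq] at hA'
  simp only [innerₗ_apply_apply, real_inner_self_eq_norm_sq, hpq] at hN
  dsimp only
  rw [hsub, hA', hN, map_add, map_smul, map_smul]
  simp only [smul_eq_mul]
  nlinarith [hA (p - q), mul_nonneg ha hb]

theorem convexOn_toReal_of_ereal_convex {E : Type*} [AddCommGroup E] [Module ℝ E] {ψ : E → EReal}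
    (hbot : ∀ y, ψ y ≠ ⊥)
    (hconv : ∀ u v : E, ∀ t : ℝ, 0 ≤ t → t ≤ 1 →
      ψ (t • u + (1 - t) • v) ≤ (t : EReal) * ψ u + ((1 - t : ℝ) : EReal) * ψ v) :
    ConvexOn ℝ {y | ψ y ≠ ⊤} fun y ↦ (ψ y).toReal := by
  have key : ∀ u, ψ u ≠ ⊤ → ∀ v, ψ v ≠ ⊤ → ∀ a b : ℝ, 0 ≤ a → 0 ≤ b → a + b = 1 →
      ψ (a • u + b • v) ≤ ((a * (ψ u).toReal + b * (ψ v).toReal : ℝ) : EReal) := by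
    intro u hu v hv a b ha hb hab
    obtain rfl := eq_sub_of_add_eq' hab
    have h := hconv u v a ha (by linarith)
    rwa [← EReal.coe_toReal hu (hbot u), ← EReal.coe_toReal hv (hbot v), ← EReal.coe_mul,
      ← EReal.coe_mul, ← EReal.coe_add] at h
  refine ⟨fun u hu v hv a b ha hb hab ↦ ne_top_of_le_ne_top (EReal.coe_ne_top _)
    (key u hu v hv a b ha hb hab), fun u hu v hv a b ha hb hab ↦ ?_⟩
  have h := EReal.toReal_le_toReal (key u hu v hv a b ha hb hab) (hbot _) (EReal.coe_ne_top _)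
  rwa [EReal.toReal_coe] at h

theorem isMinOn_add_toReal {E : Type*} {Q : E → ℝ} {ψ : E → EReal} (hbot : ∀ y, ψ y ≠ ⊥)
    (hproper : ∃ y, ψ y ≠ ⊤) {u : E} (hu : ∀ y, (Q u : EReal) + ψ u ≤ Q y + ψ y) :
    ψ u ≠ ⊤ ∧ IsMinOn (fun y ↦ Q y + (ψ y).toReal) {y | ψ y ≠ ⊤} u := by
  obtain ⟨y₀, hy₀⟩ := hproper
  have hfin : ψ u ≠ ⊤ := by
    intro htop
    have h := hu y₀
    rw [htop, EReal.coe_add_top, top_le_iff, ← EReal.coe_toReal hy₀ (hbot y₀),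
      ← EReal.coe_add] at h
    exact EReal.coe_ne_top _ h
  refine ⟨hfin, isMinOn_iff.2 fun y hy ↦ ?_⟩
  have h := hu y
  rwa [← EReal.coe_toReal hfin (hbot u), ← EReal.coe_toReal hy (hbot y), ← EReal.coe_add,
    ← EReal.coe_add, EReal.coe_le_coe_iff] at h

theorem norm_sub_le_of_add_mul_sq_le {E : Type*} [NormedAddCommGroup E] [InnerProductSpace ℝ E]
    {u v x : E} {l l' : ℝ} (hl' : 0 < l') (hle : l ≤ l')
    (h : (l + l') * ‖u - v‖ ^ 2 ≤ (l' - l) * (‖u - x‖ ^ 2 - ‖v - x‖ ^ 2)) :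
    ‖u - v‖ ≤ (l' - l) / l' * ‖x - u‖ := by
  have hv : ‖v - x‖ ^ 2 = ‖u - x‖ ^ 2 - 2 * inner ℝ (u - x) (u - v) + ‖u - v‖ ^ 2 := by
    rw [show v - x = (u - x) - (u - v) by abel, norm_sub_sq_real]
  have hcs := real_inner_le_norm (u - x) (u - v)
  have key : l' * ‖u - v‖ * ‖u - v‖ ≤ (l' - l) * ‖u - x‖ * ‖u - v‖ := by
    nlinarith [mul_le_mul_of_nonneg_left hcs (sub_nonneg.2 hle)]
  rw [norm_sub_rev x u, div_mul_eq_mul_div, le_div_iff₀ hl']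
  rcases (norm_nonneg (u - v)).eq_or_lt with h₀ | hpos
  · rw [← h₀, zero_mul]
    exact mul_nonneg (sub_nonneg.2 hle) (norm_nonneg _)
  · rw [mul_comm]
    exact le_of_mul_le_mul_right key hpos

theorem step_sensitivity_in_lambda_general
    {H : Type*} [NormedAddCommGroup H] [InnerProductSpace ℝ H]
    (A : H →L[ℝ] (H →L[ℝ] ℝ))
    (hApsd : ∀ h : H, 0 ≤ A h h)
    (g : H →L[ℝ] ℝ)
    (ψ : H → EReal)
    (hψbot : ∀ y, ψ y ≠ ⊥) (hψproper : ∃ y, ψ y ≠ ⊤)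
    (hψconv : ∀ u v : H, ∀ t : ℝ, 0 ≤ t → t ≤ 1 →
      ψ (t • u + (1 - t) • v) ≤ (t : EReal) * ψ u + ((1 - t : ℝ) : EReal) * ψ v)
    (x : H) (xplus : ℝ → H)
    (hmin : ∀ lam : ℝ, 0 < lam → ∀ y : H,
      ((g (xplus lam - x) + 1 / 2 * A (xplus lam - x) (xplus lam - x)
          + lam / 2 * ‖xplus lam - x‖ ^ 2 : ℝ) : EReal) + ψ (xplus lam) ≤
      ((g (y - x) + 1 / 2 * A (y - x) (y - x)
          + lam / 2 * ‖y - x‖ ^ 2 : ℝ) : EReal) + ψ y) :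
    ∀ lam lam' : ℝ, 0 < lam → lam ≤ lam' →
      ‖xplus lam - xplus lam'‖ ≤ (lam' - lam) / lam' * ‖x - xplus lam‖ := by
  intro lam lam' hlam hle
  have hψ := convexOn_toReal_of_ereal_convex hψbot hψconv
  let Q : ℝ → H → ℝ := fun μ y ↦ g (y - x) + 1 / 2 * A (y - x) (y - x) + μ / 2 * ‖y - x‖ ^ 2
  have hF (μ : ℝ) : StrongConvexOn {y | ψ y ≠ ⊤} μ fun y ↦ Q μ y + (ψ y).toReal := by
    have h := (strongConvexOn_quadratic hψ.1 A hApsd g x μ).add hψ.uniformConvexOn_zero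
    rwa [add_zero] at h
  obtain ⟨hu, hu_min⟩ := isMinOn_add_toReal (Q := Q lam) hψbot hψproper (hmin lam hlam)
  obtain ⟨hv, hv_min⟩ :=
    isMinOn_add_toReal (Q := Q lam') hψbot hψproper (hmin lam' (hlam.trans_le hle))
  have h₁ := (hF lam).add_le_of_isMinOn hu_min hu hv
  have h₂ := (hF lam').add_le_of_isMinOn hv_min hv hu
  rw [norm_sub_rev (xplus lam')] at h₁
  refine norm_sub_le_of_add_mul_sq_le (hlam.trans_le hle) hle ?_
  simp only [Q] at h₁ h₂
  linarith

theorem step_sensitivity_in_lambda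
    {H : Type*} [NormedAddCommGroup H] [InnerProductSpace ℝ H]
    (A : H →L[ℝ] (H →L[ℝ] ℝ))
    (hAsym : ∀ u v : H, A u v = A v u)
    (hApsd : ∀ h : H, 0 ≤ A h h)
    (g : H →L[ℝ] ℝ)
    (ψ : H → EReal)
    (hψbot : ∀ y, ψ y ≠ ⊥) (hψproper : ∃ y, ψ y ≠ ⊤)
    (hψconv : ∀ u v : H, ∀ t : ℝ, 0 ≤ t → t ≤ 1 →
      ψ (t • u + (1 - t) • v) ≤ (t : EReal) * ψ u + ((1 - t : ℝ) : EReal) * ψ v)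
    (hψlsc : LowerSemicontinuous ψ)
    (x : H) (xplus : ℝ → H)
    (hmin : ∀ lam : ℝ, 0 < lam → ∀ y : H,
      ((g (xplus lam - x) + 1 / 2 * A (xplus lam - x) (xplus lam - x)
          + lam / 2 * ‖xplus lam - x‖ ^ 2 : ℝ) : EReal) + ψ (xplus lam) ≤
      ((g (y - x) + 1 / 2 * A (y - x) (y - x)
          + lam / 2 * ‖y - x‖ ^ 2 : ℝ) : EReal) + ψ y)
    (huniq : ∀ lam : ℝ, 0 < lam → ∀ z : H,
      (∀ y : H,
        ((g (z - x) + 1 / 2 * A (z - x) (z - x)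
            + lam / 2 * ‖z - x‖ ^ 2 : ℝ) : EReal) + ψ z ≤
        ((g (y - x) + 1 / 2 * A (y - x) (y - x)
            + lam / 2 * ‖y - x‖ ^ 2 : ℝ) : EReal) + ψ y) → z = xplus lam) :
    ∀ lam lam' : ℝ, 0 < lam → lam ≤ lam' →
      ‖xplus lam - xplus lam'‖ ≤ (lam' - lam) / lam' * ‖x - xplus lam‖ :=
  step_sensitivity_in_lambda_general A hApsd g ψ hψbot hψproper hψconv x xplus hmin
end

section
/- Let F: H → ℝ be bounded below by F* and satisfy the Polyak–Łojasiewicz inequality (1/(2μ)) dist(0, ∂F(x))² ≥ F(x) − F* for μ > 0. If F(x_k) − F(x_{k+1}) ≥ (1/(16 λ_k)) dist(0, ∂F(x_{k+1}))² with 0 < λ_k ≤ λ̄, then F(x_{k+1}) − F* ≤ (1 − μ/(μ + 8λ_k)) (F(x_k) − F*). -/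
/-! Writing `a = F(x_k) - F*`, `b = F(x_{k+1}) - F*` and `d = dist(0, ∂F(x_{k+1}))`, the PL inequality
gives `2μ b ≤ d²` and the decrease condition gives `d² ≤ 16λ (a - b)`. Chaining them,
`μ b ≤ 8λ (a - b)`, i.e. `b ≤ 8λ / (μ + 8λ) · a`. -/

lemma mul_le_sq_of_le_inv_mul_sq {μ b d : ℝ} (hμ : 0 < μ) (h : b ≤ 1 / (2 * μ) * d ^ 2) :
    2 * μ * b ≤ d ^ 2 := by
  rwa [one_div_mul_eq_div, le_div_iff₀' (by positivity)] at h

lemma sq_le_mul_of_inv_mul_sq_le {lam c d : ℝ} (hlam : 0 < lam)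
    (h : c ≥ 1 / (16 * lam) * d ^ 2) : d ^ 2 ≤ 16 * lam * c := by
  rwa [ge_iff_le, one_div_mul_eq_div, div_le_iff₀' (by positivity)] at h

lemma le_one_sub_div_mul_of_mul_le {μ lam a b : ℝ} (hμ : 0 < μ) (hlam : 0 < lam)
    (h : μ * b ≤ 8 * lam * (a - b)) : b ≤ (1 - μ / (μ + 8 * lam)) * a := by
  have hpos : 0 < μ + 8 * lam := by positivity
  have hrate : 1 - μ / (μ + 8 * lam) = 8 * lam / (μ + 8 * lam) := by
    field_simp
    ring
  rw [hrate, div_mul_eq_mul_div, le_div_iff₀ hpos]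
  linarith

theorem PL_linear_decrease_step_general
    {H : Type*} [NormedAddCommGroup H] [InnerProductSpace ℝ H]
    (F : H → ℝ) (Fstar : ℝ)
    (subdiff : H → Set (H →L[ℝ] ℝ))
    (mu : ℝ) (hmu : 0 < mu)
    (hPL : ∀ x : H,
      F x - Fstar ≤ 1 / (2 * mu) * (Metric.infDist 0 (subdiff x)) ^ 2)
    (x : ℕ → H) (lam : ℕ → ℝ)
    (hlampos : ∀ k, 0 < lam k)
    (hdec : ∀ k : ℕ, F (x k) - F (x (k + 1)) ≥
      1 / (16 * lam k) * (Metric.infDist 0 (subdiff (x (k + 1)))) ^ 2) :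
    ∀ k : ℕ, F (x (k + 1)) - Fstar ≤
      (1 - mu / (mu + 8 * lam k)) * (F (x k) - Fstar) := by
  intro k
  have hPL_step := mul_le_sq_of_le_inv_mul_sq hmu (hPL (x (k + 1)))
  have hdec_step := sq_le_mul_of_inv_mul_sq_le (hlampos k) (hdec k)
  apply le_one_sub_div_mul_of_mul_le hmu (hlampos k)
  linarith

theorem PL_linear_decrease_step
    {H : Type*} [NormedAddCommGroup H] [InnerProductSpace ℝ H]
    (F : H → ℝ) (Fstar : ℝ) (hlow : ∀ x, Fstar ≤ F x)
    (subdiff : H → Set (H →L[ℝ] ℝ))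
    (mu : ℝ) (hmu : 0 < mu)
    (hPL : ∀ x : H,
      F x - Fstar ≤ 1 / (2 * mu) * (Metric.infDist 0 (subdiff x)) ^ 2)
    (x : ℕ → H) (lam : ℕ → ℝ) (lamBar : ℝ)
    (hlampos : ∀ k, 0 < lam k) (hlamb : ∀ k, lam k ≤ lamBar)
    (hdec : ∀ k : ℕ, F (x k) - F (x (k + 1)) ≥
      1 / (16 * lam k) * (Metric.infDist 0 (subdiff (x (k + 1)))) ^ 2) :
    ∀ k : ℕ, F (x (k + 1)) - Fstar ≤
      (1 - mu / (mu + 8 * lam k)) * (F (x k) - Fstar) :=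
  PL_linear_decrease_step_general F Fstar subdiff mu hmu hPL x lam hlampos hdec
end
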